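/- Fix N ∈ ℕ and dimensions n, m. For each time step k < N let A(k) be a real n×n matrix, B(k) a real n×m matrix, and let Q(k) (n×n), S(k) (n×m), R(k) (m×m) be stage-cost Hessian blocks such that the block matrix fromBlocks Q(k) S(k) S(k)ᵀ R(k) is positive definite. Let V : ℕ → (real n×n matrices) satisfy: V(N) is positive definite, and for every k < N the Riccati backward recursion V(k) = (Q(k) + A(k)ᵀ V(k+1) A(k)) - (S(k) + A(k)ᵀ V(k+1) B(k)) (R(k) + B(k)ᵀ V(k+1) B(k))⁻¹ (S(k) + A(k)ᵀ V(k+1) B(k))ᵀ holds. Then for every k ≤ N the matrix V(k) is positive definite, and for every k < N the control Hessian H_uu(k) = R(k) + B(k)ᵀ V(k+1) B(k) is positive definite. -/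

import Mathlib

open Matrix

/-!
Write `L = [[Q, S], [Sᵀ, R]]` for the stage-cost Hessian and `G = [A B]` for the stacked
Jacobian. The Hessian of the `Q`-function, `H = L + Gᵀ V(k+1) G`, is positive definite when
`V(k+1)` is positive semidefinite. Its `(2,2)` block is `H_uu(k)`, and `V(k)` is the Schur
complement of that block, so both are positive definite. Backward induction from `V(N)`
finishes the proof.
-/

namespace Matrix.PosDef

variable {m n K : Type*} [Field K] [PartialOrder K] [StarRing K]

theorem toBlocks₂₂ {M : Matrix (m ⊕ n) (m ⊕ n) K} (hM : M.PosDef) : M.toBlocks₂₂.PosDef :=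
  hM.submatrix Sum.inr_injective

variable [Fintype m] [Fintype n] [DecidableEq n]

theorem schur_complement₂₂ {A : Matrix m m K} {B : Matrix m n K} {D : Matrix n n K}
    (hM : (fromBlocks A B Bᴴ D).PosDef) : (A - B * D⁻¹ * Bᴴ).PosDef := by
  have hD : D.PosDef := by simpa using hM.toBlocks₂₂
  have := hD.isUnit.invertible
  refine of_dotProduct_mulVec_pos ((IsHermitian.fromBlocks₂₂ A B hD.1).mp hM.1) fun x hx => ?_
  -- at this vector the first summand of `schur_complement_eq₂₂` vanishes
  have hxy : x ⊕ᵥ -((D⁻¹ * Bᴴ) *ᵥ x) ≠ 0 := fun h => hx (funext fun i => congrFun h (Sum.inl i))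
  simpa [dotProduct_mulVec, schur_complement_eq₂₂ A B x _ hD.1] using hM.dotProduct_mulVec_pos hxy

end Matrix.PosDef

namespace Matrix

variable {n m K : Type*} [Fintype n]

theorem fromBlocks_add_conjTranspose_fromCols_mul_mul [Ring K] [StarRing K] (Q : Matrix n n K)
    (S : Matrix n m K) (R : Matrix m m K) (A : Matrix n n K) (B : Matrix n m K) {W : Matrix n n K}
    (hW : W.IsHermitian) :
    fromBlocks Q S Sᴴ R + (fromCols A B)ᴴ * W * fromCols A B =
      fromBlocks (Q + Aᴴ * W * A) (S + Aᴴ * W * B) (S + Aᴴ * W * B)ᴴ (R + Bᴴ * W * B) := by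
  rw [conjTranspose_fromCols_eq_fromRows_conjTranspose, fromRows_mul, fromRows_mul_fromCols,
    fromBlocks_add]
  simp [conjTranspose_add, conjTranspose_mul, hW.eq, Matrix.mul_assoc]

variable [Fintype m] [DecidableEq m] [Field K] [PartialOrder K] [StarRing K] [StarOrderedRing K]

theorem PosDef.riccati_step {Q : Matrix n n K} {S : Matrix n m K} {R : Matrix m m K}
    (hL : (fromBlocks Q S Sᴴ R).PosDef) (A : Matrix n n K) (B : Matrix n m K)
    {W : Matrix n n K} (hW : W.PosSemidef) :
    ((Q + Aᴴ * W * A) - (S + Aᴴ * W * B) * (R + Bᴴ * W * B)⁻¹ * (S + Aᴴ * W * B)ᴴ).PosDef ∧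
      (R + Bᴴ * W * B).PosDef := by
  have hH := hL.add_posSemidef (hW.conjTranspose_mul_mul_same (fromCols A B))
  rw [fromBlocks_add_conjTranspose_fromCols_mul_mul Q S R A B hW.1] at hH
  exact ⟨hH.schur_complement₂₂, by simpa using hH.toBlocks₂₂⟩

end Matrix

/-- In the DDP backward pass with linearized dynamics `A k, B k`, stage-cost
Hessian blocks `Q k, S k, R k` whose joint block matrix is positive definite at every
stage, and positive definite terminal value Hessian `V N`, the Riccati backward
recursion preserves positive definiteness: every `V k` (k ≤ N) is positive definite
and every control Hessian `H_uu k = R k + (B k)ᵀ V (k+1) B k` (k < N) is positive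
definite. -/
theorem riccati_backward_posDef
    {n m : ℕ} (N : ℕ)
    (A : ℕ → Matrix (Fin n) (Fin n) ℝ) (B : ℕ → Matrix (Fin n) (Fin m) ℝ)
    (Q : ℕ → Matrix (Fin n) (Fin n) ℝ) (S : ℕ → Matrix (Fin n) (Fin m) ℝ)
    (R : ℕ → Matrix (Fin m) (Fin m) ℝ)
    (hL : ∀ k < N, (Matrix.fromBlocks (Q k) (S k) (S k)ᵀ (R k)).PosDef)
    (V : ℕ → Matrix (Fin n) (Fin n) ℝ)
    (hVN : (V N).PosDef)
    (hrec : ∀ k < N,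
      V k = (Q k + (A k)ᵀ * V (k + 1) * A k) -
        (S k + (A k)ᵀ * V (k + 1) * B k) * (R k + (B k)ᵀ * V (k + 1) * B k)⁻¹ *
          (S k + (A k)ᵀ * V (k + 1) * B k)ᵀ) :
    (∀ k ≤ N, (V k).PosDef) ∧
      (∀ k < N, (R k + (B k)ᵀ * V (k + 1) * B k).PosDef) := by
  simp only [← conjTranspose_eq_transpose_of_trivial] at hL hrec ⊢
  have step (k : ℕ) (hk : k < N) (hV : (V (k + 1)).PosDef) :=
    (hL k hk).riccati_step (A k) (B k) hV.posSemidef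
  have hV (k : ℕ) (hk : k ≤ N) : (V k).PosDef := by
    induction hk using Nat.decreasingInduction with
    | self => exact hVN
    | of_succ k hk ih => exact hrec k hk ▸ (step k hk ih).1
  exact ⟨hV, fun k hk => (step k hk (hV (k + 1) hk)).2⟩
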